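/- arXiv:math/0008043 — 3 statements merged into one kernel-verified Lean document; each statement's English description precedes it below -/
import Mathlib

section
/- Let ρ ≠ 0 and r₂ satisfy r₂ + 1 - 2|ρ| > 0. If a sequence (r_k)_{k≥0} satisfies r₀ = 1, r₁ = ρ, (1+r₂) r_k = ρ(r_{k-1} + r_{k+1}) for all k ≥ 1, and |r_k| ≤ 1 for all k, then r_k → 0 as k → ∞ and r_k² < 1 for all k > 2. -/
/-!
Dividing the recurrence by `ρ` gives `r (k + 2) = s r (k + 1) - r k` with `s = (1 + r₂) / ρ`, and
`r₂ + 1 > 2|ρ|` says `|s| > 2`. The characteristic roots `c, d` of `x² - s x + 1` are then real with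
`|c| < 1 < |d|`, and `r (k + 1) - c r k` is a geometric sequence of ratio `d`. Being bounded, it
vanishes, so `r k = c ^ k`.
-/

open Filter

lemma exists_add_eq_mul_eq_one_of_two_lt {s : ℝ} (hs : 2 < s) :
    ∃ c d : ℝ, c + d = s ∧ c * d = 1 ∧ |c| < 1 ∧ 1 < |d| := by
  set t := √(s ^ 2 - 4)
  have ht : t ^ 2 = s ^ 2 - 4 := Real.sq_sqrt (by nlinarith)
  have ht_pos : 0 < t := Real.sqrt_pos.2 (by nlinarith)
  have hts : t < s := by nlinarith
  refine ⟨(s - t) / 2, (s + t) / 2, by ring, by nlinarith, ?_, ?_⟩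
  · rw [abs_lt]; constructor <;> nlinarith
  · rw [lt_abs]; left; linarith

lemma exists_add_eq_mul_eq_one_of_two_lt_abs {s : ℝ} (hs : 2 < |s|) :
    ∃ c d : ℝ, c + d = s ∧ c * d = 1 ∧ |c| < 1 ∧ 1 < |d| := by
  rcases lt_abs.1 hs with hs | hs
  · exact exists_add_eq_mul_eq_one_of_two_lt hs
  · obtain ⟨c, d, hsum, hprod, hc, hd⟩ := exists_add_eq_mul_eq_one_of_two_lt hs
    exact ⟨-c, -d, by linarith, by linarith, by rwa [abs_neg], by rwa [abs_neg]⟩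

lemma eq_zero_of_bounded_of_mul_succ {a : ℕ → ℝ} {d M : ℝ} (hd : 1 < |d|)
    (hstep : ∀ k, a (k + 1) = d * a k) (hbd : ∀ k, |a k| ≤ M) (k : ℕ) : a k = 0 := by
  have hgeom : ∀ k, a k = d ^ k * a 0 := by
    intro k
    induction k with
    | zero => simp
    | succ n ih => rw [hstep n, ih, pow_succ]; ring
  suffices ha0 : a 0 = 0 by rw [hgeom k, ha0, mul_zero]
  by_contra ha0
  have hgrow : Tendsto (fun k ↦ |d| ^ k * |a 0|) atTop atTop :=
    (tendsto_pow_atTop_atTop_of_one_lt hd).atTop_mul_const (abs_pos.2 ha0)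
  obtain ⟨n, hn⟩ := (hgrow.eventually_gt_atTop M).exists
  have := hbd n
  rw [hgeom n, abs_mul, abs_pow] at this
  linarith

lemma eq_mul_pow_of_bounded {x : ℕ → ℝ} {c d M : ℝ} (hcd : c * d = 1) (hd : 1 < |d|)
    (hrec : ∀ k, x (k + 2) = (c + d) * x (k + 1) - x k) (hbd : ∀ k, |x k| ≤ M) (k : ℕ) :
    x k = x 0 * c ^ k := by
  have hstep : ∀ k, x (k + 2) - c * x (k + 1) = d * (x (k + 1) - c * x k) := fun k ↦ by
    linear_combination hrec k + x k * hcd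
  have hdiff_bd : ∀ k, |x (k + 1) - c * x k| ≤ M + |c| * M := fun k ↦ by
    calc |x (k + 1) - c * x k| ≤ |x (k + 1)| + |c| * |x k| := by
          rw [← abs_mul]; exact abs_sub _ _
      _ ≤ M + |c| * M := by gcongr <;> exact hbd _
  have hdiff := eq_zero_of_bounded_of_mul_succ hd hstep hdiff_bd
  induction k with
  | zero => simp
  | succ n ih => linear_combination hdiff n + c * ih

theorem stmt_1_general (ρ r₂ : ℝ) (r : ℕ → ℝ)
    (hρ : ρ ≠ 0) (hr3 : r₂ + 1 - 2 * |ρ| > 0)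
    (h0 : r 0 = 1)
    (hrec : ∀ k : ℕ, 1 ≤ k → (1 + r₂) * r k = ρ * (r (k - 1) + r (k + 1)))
    (hbd : ∀ k, |r k| ≤ 1) :
    Filter.Tendsto r Filter.atTop (nhds 0) ∧ ∀ k, 2 < k → (r k) ^ 2 < 1 := by
  set s := (1 + r₂) / ρ
  have hs : 2 < |s| := by
    rw [abs_div, abs_of_pos (by linarith [abs_nonneg ρ]), lt_div_iff₀ (abs_pos.2 hρ)]
    linarith
  have hrec' : ∀ k, r (k + 2) = s * r (k + 1) - r k := fun k ↦ by
    have h := hrec (k + 1) le_add_self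
    rw [Nat.add_sub_cancel] at h
    rw [div_mul_eq_mul_div, eq_sub_iff_add_eq, eq_div_iff hρ, h]
    ring
  obtain ⟨c, d, hsum, hcd, hc, hd⟩ := exists_add_eq_mul_eq_one_of_two_lt_abs hs
  have hr : r = fun k ↦ c ^ k := funext fun k ↦ by
    rw [eq_mul_pow_of_bounded hcd hd (hsum ▸ hrec') hbd k, h0, one_mul]
  subst hr
  refine ⟨tendsto_pow_atTop_nhds_zero_of_abs_lt_one hc, fun k hk ↦ ?_⟩
  rw [← pow_mul, mul_comm, pow_mul, ← sq_abs]
  exact pow_lt_one₀ (sq_nonneg _) (by nlinarith [abs_nonneg c]) (by omega)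

theorem stmt_1 (ρ r₂ : ℝ) (r : ℕ → ℝ)
    (hρ : ρ ≠ 0) (hr3 : r₂ + 1 - 2 * |ρ| > 0)
    (h0 : r 0 = 1) (h1 : r 1 = ρ) (h2 : r 2 = r₂)
    (hrec : ∀ k : ℕ, 1 ≤ k → (1 + r₂) * r k = ρ * (r (k - 1) + r (k + 1)))
    (hbd : ∀ k, |r k| ≤ 1) :
    Filter.Tendsto r Filter.atTop (nhds 0) ∧ ∀ k, 2 < k → (r k) ^ 2 < 1 :=
  stmt_1_general ρ r₂ r hρ hr3 h0 hrec hbd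
end

section
/- Let X₀, Y₀ be integrable random variables and F, G σ-fields such that σ(X₀, F) is independent of σ(Y₀, G). Suppose E(X₀|F) = ρX₁ and E(Y₀|G) = ρY₁ where X₁ is F-measurable and Y₁ is G-measurable. Let Z₀ = aX₀ + bY₀, Z₁ = aX₁ + bY₁ with a²+b²=1. Then E(Z₀ | F ∨ G) = ρZ₁. -/
open MeasureTheory ProbabilityTheory

/-- If `mA ⊥ mB`, `f` is `mA`-measurable and integrable, `t ∈ mA`, `u ∈ mB`, then
`∫_{t∩u} f = (∫_t f) * ∫_u 1`. -/
lemma aux_setIntegral_inter {Ω : Type*} (mA mB : MeasurableSpace Ω)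
    {m0 : MeasurableSpace Ω} (μ : Measure Ω) [IsProbabilityMeasure μ]
    (hAB : Indep mA mB μ)
    (f : Ω → ℝ) (hf : Measurable[mA] f) (hfint : Integrable f μ)
    {t u : Set Ω} (ht : MeasurableSet[mA] t) (hu : MeasurableSet[mB] u)
    (htm0 : MeasurableSet t) (hum0 : MeasurableSet u) :
    ∫ x in t ∩ u, f x ∂μ = (∫ x in t, f x ∂μ) * ∫ x in u, (1 : ℝ) ∂μ := by
  have hf1m : Measurable[mA] (t.indicator f) := hf.indicator ht
  have hone : Measurable[mB] (fun _ : Ω => (1 : ℝ)) := fun s _ => MeasurableSet.const _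
  have hg1m : Measurable[mB] (u.indicator (1 : Ω → ℝ)) := hone.indicator hu
  have hIF : IndepFun (t.indicator f) (u.indicator (1 : Ω → ℝ)) μ :=
    indep_of_indep_of_le_left (indep_of_indep_of_le_right hAB
      (measurable_iff_comap_le.mp hg1m))
      (measurable_iff_comap_le.mp hf1m)
  have h1 : Integrable (t.indicator f) μ := hfint.indicator htm0
  have h2 : Integrable (u.indicator (1 : Ω → ℝ)) μ :=
    (integrable_const (1 : ℝ)).indicator hum0
  have hmul := hIF.integral_mul_eq_mul_integral h1.1 h2.1
  have hindic : t.indicator f * u.indicator (1 : Ω → ℝ) = (t ∩ u).indicator f := by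
    ext x
    by_cases hxt : x ∈ t <;> by_cases hxu : x ∈ u <;>
      simp [Set.indicator, hxt, hxu, Set.mem_inter_iff]
  calc ∫ x in t ∩ u, f x ∂μ = ∫ x, (t ∩ u).indicator f x ∂μ :=
        (integral_indicator (htm0.inter hum0)).symm
    _ = integral μ (t.indicator f * u.indicator (1 : Ω → ℝ)) := by rw [hindic]
    _ = (∫ x, t.indicator f x ∂μ) * ∫ x, u.indicator (1 : Ω → ℝ) x ∂μ := hmul
    _ = (∫ x in t, f x ∂μ) * ∫ x in u, (1 : ℝ) ∂μ := by
        rw [integral_indicator htm0, integral_indicator hum0]; rfl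

lemma aux_condexp_sup {Ω : Type*} (F G : MeasurableSpace Ω)
    {m0 : MeasurableSpace Ω} (μ : Measure Ω)
    [IsProbabilityMeasure μ] (hF : F ≤ m0) (hG : G ≤ m0)
    (X : Ω → ℝ) (hXint : Integrable X μ)
    (hindep : Indep (F ⊔ MeasurableSpace.comap X (borel ℝ)) G μ) :
    μ[X | F ⊔ G] =ᵐ[μ] μ[X | F] := by
  have hb : borel ℝ = (inferInstance : MeasurableSpace ℝ) := BorelSpace.measurable_eq.symm
  rw [hb] at hindep
  have hFG : F ⊔ G ≤ m0 := sup_le hF hG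
  refine (ae_eq_condExp_of_forall_setIntegral_eq hFG hXint
    (fun s _ _ => integrable_condExp.restrict) (fun s hs _ => ?_)
    (StronglyMeasurable.aestronglyMeasurable
      (stronglyMeasurable_condExp.mono le_sup_left))).symm
  -- show ∫ x in s, μ[X|F] x ∂μ = ∫ x in s, X x ∂μ for s ∈ F ⊔ G
  have h_eq : F ⊔ G = MeasurableSpace.generateFrom
      {s : Set Ω | ∃ t u, MeasurableSet[F] t ∧ MeasurableSet[G] u ∧ s = t ∩ u} := by
    refine le_antisymm (sup_le ?_ ?_) (MeasurableSpace.generateFrom_le ?_)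
    · intro t ht
      exact MeasurableSpace.measurableSet_generateFrom
        ⟨t, Set.univ, ht, MeasurableSet.univ, (Set.inter_univ t).symm⟩
    · intro u hu
      exact MeasurableSpace.measurableSet_generateFrom
        ⟨Set.univ, u, MeasurableSet.univ, hu, (Set.univ_inter u).symm⟩
    · rintro s ⟨t, u, ht, hu, rfl⟩
      exact MeasurableSet.inter ((le_sup_left : F ≤ F ⊔ G) t ht)
        ((le_sup_right : G ≤ F ⊔ G) u hu)
  have h_pi : IsPiSystem
      {s : Set Ω | ∃ t u, MeasurableSet[F] t ∧ MeasurableSet[G] u ∧ s = t ∩ u} := by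
    rintro s ⟨t1, u1, ht1, hu1, rfl⟩ s' ⟨t2, u2, ht2, hu2, rfl⟩ _
    exact ⟨t1 ∩ t2, u1 ∩ u2, ht1.inter ht2, hu1.inter hu2, by
      ext x; simp [Set.mem_inter_iff]; tauto⟩
  have hm1 : Measurable[F ⊔ MeasurableSpace.comap X inferInstance] X :=
    (measurable_iff_comap_le.mpr le_rfl).mono le_sup_right le_rfl
  have hcondm : Measurable[F ⊔ MeasurableSpace.comap X inferInstance] (μ[X | F]) :=
    (stronglyMeasurable_condExp.measurable).mono le_sup_left le_rfl
  have key : ∀ s, MeasurableSet[F ⊔ G] s →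
      ∫ x in s, (μ[X | F]) x ∂μ = ∫ x in s, X x ∂μ := by
    refine MeasurableSpace.induction_on_inter (m := F ⊔ G) h_eq h_pi ?_ ?_ ?_ ?_
    · simp
    · rintro s ⟨t, u, ht, hu, rfl⟩
      have htm0 : MeasurableSet t := hF t ht
      have hum0 : MeasurableSet u := hG u hu
      have htA : MeasurableSet[F ⊔ MeasurableSpace.comap X inferInstance] t :=
        (le_sup_left : F ≤ _) t ht
      rw [aux_setIntegral_inter _ G μ hindep _ hcondm integrable_condExp htA hu htm0 hum0,
        aux_setIntegral_inter _ G μ hindep _ hm1 hXint htA hu htm0 hum0,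
        setIntegral_condExp hF hXint ht]
    · intro s hsm hs
      have hsm0 : MeasurableSet s := hFG s hsm
      have h1 := integral_add_compl hsm0 (integrable_condExp (f := X) (m := F) (μ := μ))
      have h2 := integral_add_compl hsm0 hXint
      have h3 : ∫ x, (μ[X | F]) x ∂μ = ∫ x, X x ∂μ := by
        simpa using setIntegral_condExp hF hXint (MeasurableSet.univ (α := Ω) (m := F))
      linarith
    · intro f hdisj hfm hfC
      have hfm0 : ∀ i, MeasurableSet (f i) := fun i => hFG _ (hfm i)
      rw [integral_iUnion hfm0 hdisj integrable_condExp.restrict,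
        integral_iUnion hfm0 hdisj hXint.restrict]
      exact tsum_congr hfC
  exact key s hs

theorem stmt_15 {Ω : Type*} {m0 : MeasurableSpace Ω} (μ : Measure Ω) [IsProbabilityMeasure μ]
    (F G : MeasurableSpace Ω) (hF : F ≤ m0) (hG : G ≤ m0)
    (X₀ X₁ Y₀ Y₁ : Ω → ℝ) (ρ a b : ℝ)
    (hX₀int : Integrable X₀ μ) (hY₀int : Integrable Y₀ μ)
    (hX₁ : Measurable[F] X₁) (hY₁ : Measurable[G] Y₁)
    (hindep : Indep (F ⊔ MeasurableSpace.comap X₀ (borel ℝ))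
                    (G ⊔ MeasurableSpace.comap Y₀ (borel ℝ)) μ)
    (hcX : μ[X₀ | F] =ᵐ[μ] fun ω => ρ * X₁ ω)
    (hcY : μ[Y₀ | G] =ᵐ[μ] fun ω => ρ * Y₁ ω)
    (hab : a ^ 2 + b ^ 2 = 1) :
    μ[fun ω => a * X₀ ω + b * Y₀ ω | F ⊔ G]
      =ᵐ[μ] fun ω => ρ * (a * X₁ ω + b * Y₁ ω) := by
  have hX : μ[X₀ | F ⊔ G] =ᵐ[μ] fun ω => ρ * X₁ ω :=
    ((aux_condexp_sup F G μ hF hG X₀ hX₀int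
      (indep_of_indep_of_le_right hindep le_sup_left)).trans hcX)
  have hY : μ[Y₀ | F ⊔ G] =ᵐ[μ] fun ω => ρ * Y₁ ω := by
    have := aux_condexp_sup G F μ hG hF Y₀ hY₀int
      (indep_of_indep_of_le_right hindep.symm le_sup_left)
    rw [sup_comm G F] at this
    exact this.trans hcY
  have hadd : μ[fun ω => a * X₀ ω + b * Y₀ ω | F ⊔ G]
      =ᵐ[μ] fun ω => a * (μ[X₀ | F ⊔ G]) ω + b * (μ[Y₀ | F ⊔ G]) ω := by
    have h1 : μ[fun ω => a * X₀ ω + b * Y₀ ω | F ⊔ G]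
        =ᵐ[μ] μ[fun ω => a * X₀ ω | F ⊔ G] + μ[fun ω => b * Y₀ ω | F ⊔ G] :=
      condExp_add (hX₀int.const_mul a) (hY₀int.const_mul b) (F ⊔ G)
    have h2 : μ[fun ω => a * X₀ ω | F ⊔ G] =ᵐ[μ] fun ω => a * (μ[X₀ | F ⊔ G]) ω := by
      exact condExp_smul (m := F ⊔ G) (μ := μ) a X₀
    have h3 : μ[fun ω => b * Y₀ ω | F ⊔ G] =ᵐ[μ] fun ω => b * (μ[Y₀ | F ⊔ G]) ω := by
      exact condExp_smul (m := F ⊔ G) (μ := μ) b Y₀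
    filter_upwards [h1, h2, h3] with ω h1 h2 h3
    simp only [Pi.add_apply] at h1 ⊢
    rw [h1, h2, h3]
  filter_upwards [hadd, hX, hY] with ω h1 h2 h3
  rw [h1, h2, h3]
  ring
end

section
/- Under the hypotheses of the previous statement, assume additionally E(X₀²|F) = ρ²X₁² + 1 - ρ² and E(Y₀²|G) = ρ²Y₁² + 1 - ρ², with X₀², Y₀² integrable. Then E(Z₀² | F ∨ G) = ρ²Z₁² + 1 - ρ², where Z_i = aX_i + bY_i and a² + b² = 1. -/
open MeasureTheory ProbabilityTheory MeasurableSpace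

section helpers
variable {Ω : Type*}

lemma sup_eq_generateFrom_rect (F G : MeasurableSpace Ω) :
    F ⊔ G = MeasurableSpace.generateFrom
      {s | ∃ s₁ s₂, MeasurableSet[F] s₁ ∧ MeasurableSet[G] s₂ ∧ s = s₁ ∩ s₂} := by
  refine le_antisymm (sup_le ?_ ?_) (generateFrom_le ?_)
  · intro s hs
    exact measurableSet_generateFrom ⟨s, Set.univ, hs, MeasurableSet.univ,
      (Set.inter_univ s).symm⟩
  · intro s hs
    exact measurableSet_generateFrom ⟨Set.univ, s, MeasurableSet.univ, hs,
      (Set.univ_inter s).symm⟩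
  · rintro _ ⟨s₁, s₂, h1, h2, rfl⟩
    exact MeasurableSet.inter ((le_sup_left : F ≤ F ⊔ G) _ h1)
      ((le_sup_right : G ≤ F ⊔ G) _ h2)

lemma isPiSystem_rect (F G : MeasurableSpace Ω) :
    IsPiSystem {s | ∃ s₁ s₂, MeasurableSet[F] s₁ ∧ MeasurableSet[G] s₂ ∧ s = s₁ ∩ s₂} := by
  rintro _ ⟨s₁, s₂, hs₁, hs₂, rfl⟩ _ ⟨t₁, t₂, ht₁, ht₂, rfl⟩ -
  exact ⟨s₁ ∩ t₁, s₂ ∩ t₂, hs₁.inter ht₁, hs₂.inter ht₂, by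
    ext ω; simp only [Set.mem_inter_iff]; tauto⟩

lemma setIntegral_eq_of_generateFrom {m : MeasurableSpace Ω} {π : Set (Set Ω)}
    {m0 : MeasurableSpace Ω} (μ : Measure Ω)
    [IsFiniteMeasure μ]
    (hgen : m = MeasurableSpace.generateFrom π) (hpi : IsPiSystem π) (hm : m ≤ m0)
    {f g : Ω → ℝ} (hf : Integrable f μ) (hg : Integrable g μ)
    (huniv : ∫ x, f x ∂μ = ∫ x, g x ∂μ)
    (hbasic : ∀ s ∈ π, ∫ x in s, f x ∂μ = ∫ x in s, g x ∂μ) :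
    ∀ s, MeasurableSet[m] s → ∫ x in s, f x ∂μ = ∫ x in s, g x ∂μ := by
  intro s hs
  refine MeasurableSpace.induction_on_inter (m := m)
    (C := fun s _ => ∫ x in s, f x ∂μ = ∫ x in s, g x ∂μ) hgen hpi ?_ (fun t ht => hbasic t ht) ?_ ?_ s hs
  · simp
  · intro t htm ht
    have htm0 : MeasurableSet[m0] t := hm t htm
    have h1 : ∫ x in t, f x ∂μ + ∫ x in tᶜ, f x ∂μ = ∫ x, f x ∂μ :=
      integral_add_compl htm0 hf
    have h2 : ∫ x in t, g x ∂μ + ∫ x in tᶜ, g x ∂μ = ∫ x, g x ∂μ :=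
      integral_add_compl htm0 hg
    linarith
  · intro u hdisj humeas hu
    have humeas0 : ∀ i, MeasurableSet[m0] (u i) := fun i => hm _ (humeas i)
    have h1 := hasSum_integral_iUnion (μ := μ) humeas0 hdisj hf.integrableOn
    have h2 := hasSum_integral_iUnion (μ := μ) humeas0 hdisj hg.integrableOn
    have heq : (fun n => ∫ x in u n, f x ∂μ) = fun n => ∫ x in u n, g x ∂μ :=
      funext fun n => hu n
    rw [heq] at h1
    exact h1.unique h2

lemma indepFun_of_measurable {mf mg : MeasurableSpace Ω} {m0 : MeasurableSpace Ω}
    {μ : Measure Ω} (hindep : Indep mf mg μ) {X Y : Ω → ℝ}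
    (hX : Measurable[mf] X) (hY : Measurable[mg] Y) : IndepFun X Y μ := by
  rw [IndepFun_iff_Indep]
  exact indep_of_indep_of_le_left
    (indep_of_indep_of_le_right hindep (measurable_iff_comap_le.mp hY))
    (measurable_iff_comap_le.mp hX)

lemma integral_mul_of_indep {mf mg : MeasurableSpace Ω} {m0 : MeasurableSpace Ω}
    {μ : Measure Ω} (hindep : Indep mf mg μ) {X Y : Ω → ℝ}
    (hX : Measurable[mf] X) (hY : Measurable[mg] Y)
    (hXi : Integrable X μ) (hYi : Integrable Y μ) :
    ∫ x, X x * Y x ∂μ = (∫ x, X x ∂μ) * ∫ x, Y x ∂μ :=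
  IndepFun.integral_mul_eq_mul_integral (indepFun_of_measurable hindep hX hY)
    hXi.aestronglyMeasurable hYi.aestronglyMeasurable

lemma setIntegral_rect_of_indep {mf mg : MeasurableSpace Ω} {m0 : MeasurableSpace Ω}
    {μ : Measure Ω} (hindep : Indep mf mg μ) {X Y : Ω → ℝ}
    (hX : Measurable[mf] X) (hY : Measurable[mg] Y)
    (hXi : Integrable X μ) (hYi : Integrable Y μ)
    {s t : Set Ω} (hs : MeasurableSet[mf] s) (ht : MeasurableSet[mg] t)
    (hs0 : MeasurableSet[m0] s) (ht0 : MeasurableSet[m0] t) :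
    ∫ x in s ∩ t, X x * Y x ∂μ = (∫ x in s, X x ∂μ) * ∫ x in t, Y x ∂μ := by
  have hmeq : (s ∩ t).indicator (fun x => X x * Y x)
      = fun x => s.indicator X x * t.indicator Y x := by
    funext ω
    by_cases hω₁ : ω ∈ s <;> by_cases hω₂ : ω ∈ t <;>
      simp [Set.indicator_apply, hω₁, hω₂, Set.mem_inter_iff]
  calc ∫ x in s ∩ t, X x * Y x ∂μ
      = ∫ x, (s ∩ t).indicator (fun x => X x * Y x) x ∂μ :=
        (integral_indicator (hs0.inter ht0)).symm
    _ = ∫ x, s.indicator X x * t.indicator Y x ∂μ := by rw [hmeq]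
    _ = (∫ x, s.indicator X x ∂μ) * ∫ x, t.indicator Y x ∂μ :=
        integral_mul_of_indep hindep (hX.indicator hs) (hY.indicator ht)
          (hXi.indicator hs0) (hYi.indicator ht0)
    _ = (∫ x in s, X x ∂μ) * ∫ x in t, Y x ∂μ := by
        rw [integral_indicator hs0, integral_indicator ht0]

/-- Conditional expectation w.r.t. a sup with an independent σ-algebra. -/
lemma condexp_sup_of_indep {m₁ m₂ mf : MeasurableSpace Ω}
    {m0 : MeasurableSpace Ω} (μ : Measure Ω)
    [IsProbabilityMeasure μ]
    (h1 : m₁ ≤ mf) (h1' : m₁ ≤ m0) (h2 : m₂ ≤ m0)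
    (hindep : Indep mf m₂ μ) {f : Ω → ℝ} (hfint : Integrable f μ)
    (hfm : Measurable[mf] f) :
    μ[f | m₁ ⊔ m₂] =ᵐ[μ] μ[f | m₁] := by
  have hsup : m₁ ⊔ m₂ ≤ m0 := sup_le h1' h2
  refine (ae_eq_condExp_of_forall_setIntegral_eq hsup hfint
    (fun s _ _ => integrable_condExp.integrableOn) ?_ ?_).symm
  · intro s hs _
    refine setIntegral_eq_of_generateFrom μ (sup_eq_generateFrom_rect m₁ m₂)
      (isPiSystem_rect m₁ m₂) hsup integrable_condExp hfint ?_ ?_ s hs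
    · exact integral_condExp h1'
    · rintro _ ⟨s₁, s₂, hs₁, hs₂, rfl⟩
      have hcm : Measurable[mf] (μ[f|m₁]) :=
        ((stronglyMeasurable_condExp (m := m₁)).mono h1).measurable
      have hYm : Measurable[m₂] (fun _ : Ω => (1 : ℝ)) := measurable_const
      have e1 := setIntegral_rect_of_indep hindep hcm hYm
        integrable_condExp (integrable_const 1) (h1 _ hs₁) hs₂ (h1' _ hs₁) (h2 _ hs₂)
      have e2 := setIntegral_rect_of_indep hindep hfm hYm
        hfint (integrable_const 1) (h1 _ hs₁) hs₂ (h1' _ hs₁) (h2 _ hs₂)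
      simp only [mul_one] at e1 e2
      rw [e1, e2, setIntegral_condExp h1' hfint hs₁]
  · exact StronglyMeasurable.aestronglyMeasurable
      (stronglyMeasurable_condExp.mono le_sup_left)

end helpers

theorem stmt_16 {Ω : Type*} {m0 : MeasurableSpace Ω} (μ : Measure Ω) [IsProbabilityMeasure μ]
    (F G : MeasurableSpace Ω) (hF : F ≤ m0) (hG : G ≤ m0)
    (X₀ X₁ Y₀ Y₁ : Ω → ℝ) (ρ a b : ℝ)
    (hX₀int : Integrable X₀ μ) (hY₀int : Integrable Y₀ μ)
    (hX₀sqint : Integrable (fun ω => (X₀ ω) ^ 2) μ)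
    (hY₀sqint : Integrable (fun ω => (Y₀ ω) ^ 2) μ)
    (hX₁ : Measurable[F] X₁) (hY₁ : Measurable[G] Y₁)
    (hindep : Indep (F ⊔ MeasurableSpace.comap X₀ (borel ℝ))
                    (G ⊔ MeasurableSpace.comap Y₀ (borel ℝ)) μ)
    (hcX : μ[X₀ | F] =ᵐ[μ] fun ω => ρ * X₁ ω)
    (hcY : μ[Y₀ | G] =ᵐ[μ] fun ω => ρ * Y₁ ω)
    (hcX2 : μ[fun ω => (X₀ ω) ^ 2 | F] =ᵐ[μ] fun ω => ρ ^ 2 * (X₁ ω) ^ 2 + 1 - ρ ^ 2)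
    (hcY2 : μ[fun ω => (Y₀ ω) ^ 2 | G] =ᵐ[μ] fun ω => ρ ^ 2 * (Y₁ ω) ^ 2 + 1 - ρ ^ 2)
    (hab : a ^ 2 + b ^ 2 = 1) :
    μ[fun ω => (a * X₀ ω + b * Y₀ ω) ^ 2 | F ⊔ G]
      =ᵐ[μ] fun ω => ρ ^ 2 * (a * X₁ ω + b * Y₁ ω) ^ 2 + 1 - ρ ^ 2 := by
  rw [← BorelSpace.measurable_eq (α := ℝ)] at hindep
  set mF := F ⊔ MeasurableSpace.comap X₀ inferInstance with hmF
  set mG := G ⊔ MeasurableSpace.comap Y₀ inferInstance with hmG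
  have hX₀m : Measurable[mF] X₀ := measurable_iff_comap_le.mpr le_sup_right
  have hY₀m : Measurable[mG] Y₀ := measurable_iff_comap_le.mpr le_sup_right
  have hFmF : F ≤ mF := le_sup_left
  have hGmG : G ≤ mG := le_sup_left
  have hFG : Indep F G μ :=
    indep_of_indep_of_le_left (indep_of_indep_of_le_right hindep hGmG) hFmF
  -- measurable versions scaled
  have hrX₁ : Measurable[F] (fun ω => ρ * X₁ ω) := measurable_const.mul hX₁
  have hrY₁ : Measurable[G] (fun ω => ρ * Y₁ ω) := measurable_const.mul hY₁
  have hrX₁int : Integrable (fun ω => ρ * X₁ ω) μ := integrable_condExp.congr hcX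
  have hrY₁int : Integrable (fun ω => ρ * Y₁ ω) μ := integrable_condExp.congr hcY
  -- integrability of products
  have hXYint : Integrable (fun ω => X₀ ω * Y₀ ω) μ :=
    (indepFun_of_measurable hindep hX₀m hY₀m).integrable_mul hX₀int hY₀int
  have hgint : Integrable (fun ω => (ρ * X₁ ω) * (ρ * Y₁ ω)) μ :=
    (indepFun_of_measurable hFG hrX₁ hrY₁).integrable_mul hrX₁int hrY₁int
  -- cross term conditional expectation
  have hcross : μ[fun ω => X₀ ω * Y₀ ω | F ⊔ G]
      =ᵐ[μ] fun ω => (ρ * X₁ ω) * (ρ * Y₁ ω) := by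
    have hsup : F ⊔ G ≤ m0 := sup_le hF hG
    refine (ae_eq_condExp_of_forall_setIntegral_eq hsup hXYint
      (fun s _ _ => hgint.restrict) ?_ ?_).symm
    · intro s hs _
      refine setIntegral_eq_of_generateFrom μ (sup_eq_generateFrom_rect F G)
        (isPiSystem_rect F G) hsup hgint hXYint ?_ ?_ s hs
      · have e1 : ∫ x, ρ * X₁ x ∂μ = ∫ x, X₀ x ∂μ := by
          rw [← integral_congr_ae hcX, integral_condExp hF]
        have e2 : ∫ x, ρ * Y₁ x ∂μ = ∫ x, Y₀ x ∂μ := by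
          rw [← integral_congr_ae hcY, integral_condExp hG]
        rw [integral_mul_of_indep hFG hrX₁ hrY₁ hrX₁int hrY₁int,
          integral_mul_of_indep hindep hX₀m hY₀m hX₀int hY₀int, e1, e2]
      · rintro _ ⟨s₁, s₂, hs₁, hs₂, rfl⟩
        have hs₁0 : MeasurableSet[m0] s₁ := hF _ hs₁
        have hs₂0 : MeasurableSet[m0] s₂ := hG _ hs₂
        have e1 : ∫ x in s₁, ρ * X₁ x ∂μ = ∫ x in s₁, X₀ x ∂μ := by
          rw [← integral_congr_ae (ae_restrict_of_ae hcX), setIntegral_condExp hF hX₀int hs₁]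
        have e2 : ∫ x in s₂, ρ * Y₁ x ∂μ = ∫ x in s₂, Y₀ x ∂μ := by
          rw [← integral_congr_ae (ae_restrict_of_ae hcY), setIntegral_condExp hG hY₀int hs₂]
        rw [setIntegral_rect_of_indep hFG hrX₁ hrY₁ hrX₁int hrY₁int hs₁ hs₂ hs₁0 hs₂0,
          setIntegral_rect_of_indep hindep hX₀m hY₀m hX₀int hY₀int
            (hFmF _ hs₁) (hGmG _ hs₂) hs₁0 hs₂0, e1, e2]
    · exact StronglyMeasurable.aestronglyMeasurable
        (((hrX₁.mono le_sup_left le_rfl).mul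
          (hrY₁.mono le_sup_right le_rfl)).stronglyMeasurable)
  -- squared terms
  have hX2 : μ[fun ω => (X₀ ω) ^ 2 | F ⊔ G]
      =ᵐ[μ] fun ω => ρ ^ 2 * (X₁ ω) ^ 2 + 1 - ρ ^ 2 :=
    (condexp_sup_of_indep μ hFmF hF hG (indep_of_indep_of_le_right hindep hGmG)
      hX₀sqint (hX₀m.pow_const 2)).trans hcX2
  have hY2 : μ[fun ω => (Y₀ ω) ^ 2 | F ⊔ G]
      =ᵐ[μ] fun ω => ρ ^ 2 * (Y₁ ω) ^ 2 + 1 - ρ ^ 2 := by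
    rw [sup_comm F G]
    exact (condexp_sup_of_indep μ hGmG hG hF
      (indep_of_indep_of_le_right hindep.symm hFmF) hY₀sqint (hY₀m.pow_const 2)).trans hcY2
  -- decomposition of the square
  have hfeq : (fun ω => (a * X₀ ω + b * Y₀ ω) ^ 2)
      = ((a ^ 2) • (fun ω => (X₀ ω) ^ 2) + (b ^ 2) • (fun ω => (Y₀ ω) ^ 2))
        + (2 * a * b) • (fun ω => X₀ ω * Y₀ ω) := by
    funext ω
    simp only [Pi.add_apply, Pi.smul_apply, smul_eq_mul]
    ring
  have i1 : Integrable ((a ^ 2) • (fun ω => (X₀ ω) ^ 2)) μ := hX₀sqint.smul _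
  have i2 : Integrable ((b ^ 2) • (fun ω => (Y₀ ω) ^ 2)) μ := hY₀sqint.smul _
  have i3 : Integrable ((2 * a * b) • (fun ω => X₀ ω * Y₀ ω)) μ := hXYint.smul _
  have e12 := condExp_add (μ := μ) (m := F ⊔ G) (i1.add i2) i3
  have e1 := condExp_add (μ := μ) (m := F ⊔ G) i1 i2
  have s1 := condExp_smul (μ := μ) (m := F ⊔ G) (a ^ 2) (fun ω => (X₀ ω) ^ 2)
  have s2 := condExp_smul (μ := μ) (m := F ⊔ G) (b ^ 2) (fun ω => (Y₀ ω) ^ 2)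
  have s3 := condExp_smul (μ := μ) (m := F ⊔ G) (2 * a * b) (fun ω => X₀ ω * Y₀ ω)
  rw [hfeq]
  refine e12.trans ?_
  filter_upwards [e1, s1, s2, s3, hX2, hY2, hcross] with ω he1 hs1 hs2 hs3 hh1 hh2 hc
  simp only [Pi.add_apply, Pi.smul_apply, smul_eq_mul] at he1 hs1 hs2 hs3 ⊢
  rw [he1, hs1, hs2, hs3, hh1, hh2, hc]
  linear_combination (1 - ρ ^ 2) * hab
end
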